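/- Finite multiple zeta values satisfy the stuffle relation: for any indices 𝐤 and 𝐤′, ζ_𝒜(𝐤)·ζ_𝒜(𝐤′) = ζ_𝒜(𝐤 * 𝐤′) in 𝒜. In particular, the ℚ-subspace 𝒵_𝒜 of 𝒜 spanned by all finite multiple zeta values is a ℚ-subalgebra of 𝒜. -/

import Mathlib

open scoped BigOperators

set_option synthInstance.maxHeartbeats 400000

namespace FMP

/-- The type of prime numbers. -/
abbrev PP := Nat.Primes

instance (p : PP) : Fact (Nat.Prime (p : ℕ)) := ⟨p.2⟩

/-- The ideal of families vanishing at all but finitely many primes. -/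
def cofinIdeal (R : PP → Type) [∀ p, CommRing (R p)] : Ideal (∀ p, R p) where
  carrier := {f | ∀ᶠ p in Filter.cofinite, f p = 0}
  add_mem' := by
    intro f g hf hg
    show ∀ᶠ p in Filter.cofinite, (f + g) p = 0
    simp only [Set.mem_setOf_eq] at hf hg
    filter_upwards [hf, hg] with p h1 h2
    simp [h1, h2]
  zero_mem' := by
    show ∀ᶠ p in Filter.cofinite, (0 : ∀ p, R p) p = 0
    exact Filter.Eventually.of_forall fun p => rfl
  smul_mem' := by
    intro c f hf
    show ∀ᶠ p in Filter.cofinite, (c • f) p = 0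
    simp only [Set.mem_setOf_eq] at hf
    filter_upwards [hf] with p h
    simp [h]

lemma mem_cofinIdeal {R : PP → Type} [∀ p, CommRing (R p)] (f : ∀ p, R p) :
    f ∈ cofinIdeal R ↔ ∀ᶠ p in Filter.cofinite, f p = 0 := Iff.rfl

/-- The ring 𝒜 = (∏ₚ 𝔽ₚ)/(⊕ₚ 𝔽ₚ). -/
abbrev A : Type := (∀ p : PP, ZMod p) ⧸ cofinIdeal fun p => ZMod p

/-- The ring ℬ = (∏ₚ 𝔽ₚ[T])/(⊕ₚ 𝔽ₚ[T]). -/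
abbrev B : Type := (∀ p : PP, Polynomial (ZMod p)) ⧸ cofinIdeal fun p => Polynomial (ZMod p)

noncomputable def Amk : (∀ p : PP, ZMod p) →+* A := Ideal.Quotient.mk _
noncomputable def Bmk : (∀ p : PP, Polynomial (ZMod p)) →+* B := Ideal.Quotient.mk _

/-- The componentwise action of 𝒜 on ℬ, as a ring homomorphism 𝒜 →+* ℬ. -/
noncomputable def AtoB : A →+* B :=
  Ideal.Quotient.lift _
    (Bmk.comp (Pi.ringHom fun p => Polynomial.C.comp (Pi.evalRingHom (fun q : PP => ZMod (q : ℕ)) p)))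
    (fun f hf => by
      rw [RingHom.comp_apply]
      rw [show Bmk = Ideal.Quotient.mk (cofinIdeal fun p => Polynomial (ZMod p)) from rfl]
      rw [Ideal.Quotient.eq_zero_iff_mem, mem_cofinIdeal]
      rw [mem_cofinIdeal] at hf
      filter_upwards [hf] with p h
      exact (congrArg Polynomial.C h).trans Polynomial.C_0)

section QAlgebra

lemma finite_dvd_primes (n : ℤ) (hn : n ≠ 0) : {p : PP | ((p : ℕ) : ℤ) ∣ n}.Finite := by
  have hinj : Function.Injective (fun p : PP => (p : ℕ)) := fun a b h => Subtype.ext h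
  have h1 : {p : PP | ((p : ℕ) : ℤ) ∣ n} ⊆ (fun p : PP => (p : ℕ)) ⁻¹' (Set.Iic n.natAbs) := by
    intro p hp
    simp only [Set.mem_setOf_eq] at hp
    simp only [Set.mem_preimage, Set.mem_Iic]
    have hd : (p : ℕ) ∣ n.natAbs := by
      have := Int.natAbs_dvd_natAbs.mpr hp
      simpa using this
    exact Nat.le_of_dvd (Int.natAbs_pos.mpr hn) hd
  exact Set.Finite.subset ((Set.finite_Iic n.natAbs).preimage (Set.injOn_of_injective hinj)) h1

lemma eventually_intCast_ne (n : ℤ) (hn : n ≠ 0) :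
    ∀ᶠ p : PP in Filter.cofinite, (n : ZMod (p : ℕ)) ≠ 0 := by
  rw [Filter.eventually_cofinite]
  apply Set.Finite.subset (finite_dvd_primes n hn)
  intro p hp
  simp only [Set.mem_setOf_eq, not_not] at hp ⊢
  exact (ZMod.intCast_zmod_eq_zero_iff_dvd n (p : ℕ)).mp hp

lemma isUnit_int_A (n : ℤ) (hn : n ≠ 0) : IsUnit (n : A) := by
  apply IsUnit.of_mul_eq_one (Amk fun p : PP => ((n : ZMod (p : ℕ)))⁻¹)
  have h1 : (n : A) = Amk (n : ∀ p : PP, ZMod p) := (map_intCast Amk n).symm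
  rw [h1, ← map_mul, ← map_one Amk]
  rw [show Amk = Ideal.Quotient.mk (cofinIdeal fun p => ZMod p) from rfl,
    Ideal.Quotient.mk_eq_mk_iff_sub_mem, mem_cofinIdeal]
  filter_upwards [eventually_intCast_ne n hn] with p h
  simp only [Pi.sub_apply, Pi.mul_apply, Pi.intCast_apply, Pi.one_apply,
    mul_inv_cancel₀ h, sub_self]

lemma isUnit_int_B (n : ℤ) (hn : n ≠ 0) : IsUnit (n : B) := by
  apply IsUnit.of_mul_eq_one (Bmk fun p : PP => Polynomial.C ((n : ZMod (p : ℕ)))⁻¹)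
  have h1 : (n : B) = Bmk (n : ∀ p : PP, Polynomial (ZMod p)) := (map_intCast Bmk n).symm
  rw [h1, ← map_mul, ← map_one Bmk]
  rw [show Bmk = Ideal.Quotient.mk (cofinIdeal fun p => Polynomial (ZMod p)) from rfl,
    Ideal.Quotient.mk_eq_mk_iff_sub_mem, mem_cofinIdeal]
  filter_upwards [eventually_intCast_ne n hn] with p h
  simp only [Pi.sub_apply, Pi.mul_apply, Pi.intCast_apply, Pi.one_apply,
    ← Polynomial.C_eq_intCast, ← Polynomial.C_mul, mul_inv_cancel₀ h, Polynomial.C_1, sub_self]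

/-- 𝒜 is a ℚ-algebra. -/
noncomputable instance : Algebra ℚ A := RingHom.toAlgebra <|
  IsLocalization.lift (M := nonZeroDivisors ℤ) (g := Int.castRingHom A)
    (fun y => isUnit_int_A y (nonZeroDivisors.coe_ne_zero y))

/-- ℬ is a ℚ-algebra. -/
noncomputable instance : Algebra ℚ B := RingHom.toAlgebra <|
  IsLocalization.lift (M := nonZeroDivisors ℤ) (g := Int.castRingHom B)
    (fun y => isUnit_int_B y (nonZeroDivisors.coe_ne_zero y))

noncomputable instance : Module ℚ A := Algebra.toModule
noncomputable instance : Module ℚ B := Algebra.toModule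

end QAlgebra

/-- Partial sums: `psum l i = l 0 + ... + l i`. -/
def psum {r : ℕ} (l : Fin r → ℕ) (i : Fin r) : ℕ := ∑ j ∈ Finset.Iic i, l j

/-- The finset of tuples `(l 0, ..., l (r-1))` with `0 < l i < p`. -/
def pf (r p : ℕ) : Finset (Fin r → ℕ) := Fintype.piFinset fun _ => Finset.Ioo 0 p

/-- The denominator `L_1^{k_1} ⋯ L_r^{k_r}` of a term, as an element of 𝔽ₚ.
(Its inverse is `0` whenever some partial sum is divisible by `p`, so taking inverses
of these denominators automatically implements the restricted sums `Σ'`.) -/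
def den (p : PP) (k : List ℕ) (l : Fin k.length → ℕ) : ZMod (p : ℕ) :=
  ∏ i, ((psum l i : ℕ) : ZMod (p : ℕ)) ^ k.get i

/-- The weight of an index. -/
def wt (k : List ℕ) : ℕ := k.sum

/-- The finite multiple zeta value ζ_𝒜(k). -/
noncomputable def zetaA (k : List ℕ) : A :=
  Amk fun p => ∑ l ∈ (pf k.length (p : ℕ)).filter (fun l => ∑ i, l i < (p : ℕ)), (den p k l)⁻¹

/-- The variant ζ^{(i)}_𝒜(k) of finite multiple zeta values. -/
noncomputable def zetaAi (i : ℕ) (k : List ℕ) : A :=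
  Amk fun p => ∑ l ∈ (pf k.length (p : ℕ)).filter
      (fun l => (i - 1) * (p : ℕ) < ∑ j, l j ∧ ∑ j, l j < i * (p : ℕ)), (den p k l)⁻¹

/-- The finite multiple polylogarithm li_k(T) ∈ ℬ. -/
noncomputable def liT (k : List ℕ) : B :=
  Bmk fun p => ∑ l ∈ pf k.length (p : ℕ),
    Polynomial.C ((den p k l)⁻¹) * Polynomial.X ^ (∑ i, l i)

/-- The element T^p of ℬ. -/
noncomputable def Tp : B := Bmk fun p => Polynomial.X ^ (p : ℕ)

/-- The finite multiple polylogarithm li(λ, μ, ν; T) of type (λ, μ, ν). -/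
noncomputable def liType (lam mu nu : List ℕ) : B :=
  Bmk fun p =>
    ∑ l ∈ pf lam.length (p : ℕ), ∑ m ∈ pf mu.length (p : ℕ), ∑ n ∈ pf nu.length (p : ℕ),
      Polynomial.C ((den p lam l * den p mu m *
          ∏ z, ((((∑ i, l i) + (∑ j, m j) + psum n z : ℕ)) : ZMod (p : ℕ)) ^ nu.get z)⁻¹) *
        Polynomial.X ^ ((∑ i, l i) + (∑ j, m j) + (∑ z, n z))

section Words

/-- Shuffle product of words in the letters x (`true`) and y (`false`), as a multiset of words. -/
def shuffleW : List Bool → List Bool → Multiset (List Bool)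
  | [], w => {w}
  | a :: v, [] => {a :: v}
  | a :: v, b :: w => (shuffleW v (b :: w)).map (a :: ·) + (shuffleW (a :: v) w).map (b :: ·)
termination_by v w => v.length + w.length

/-- The word z_{k_1} ⋯ z_{k_r} = x^{k_1-1}y ⋯ x^{k_r-1}y associated to an index
(`true` = x, `false` = y). -/
def wordOf (k : List ℕ) : List Bool := k.flatMap fun ki => List.replicate (ki - 1) true ++ [false]

/-- The index associated to a word (ending in y). -/
def toIndex : List Bool → List ℕ
  | [] => []
  | true :: w =>
    match toIndex w with
    | [] => []
    | k :: rest => (k + 1) :: rest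
  | false :: w => 1 :: toIndex w

/-- li_{𝐤 ш 𝐤'}(T) : the sum of FMPs corresponding to the shuffle product 𝐤 ш 𝐤'. -/
noncomputable def liSh (k k' : List ℕ) : B :=
  ((shuffleW (wordOf k) (wordOf k')).map (fun w => liT (toIndex w))).sum

/-- Stuffle (harmonic) product of indices, as a multiset of indices. -/
def stuffleI : List ℕ → List ℕ → Multiset (List ℕ)
  | [], w => {w}
  | a :: v, [] => {a :: v}
  | a :: v, b :: w =>
      ((stuffleI v (b :: w)).map (a :: ·)) + ((stuffleI (a :: v) w).map (b :: ·)) +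
        ((stuffleI v w).map ((a + b) :: ·))
termination_by v w => v.length + w.length

end Words

section Spans

/-- 𝒵_𝒜 : the ℚ-span of all finite multiple zeta values inside 𝒜. -/
noncomputable def ZAspan : Submodule ℚ A :=
  Submodule.span ℚ {x : A | ∃ k : List ℕ, (∀ i ∈ k, 0 < i) ∧ x = zetaA k}

/-- 𝒵_𝒜[Tᵖ] : the subring of ℬ generated by the image of 𝒵_𝒜 and Tᵖ. -/
noncomputable def ZATp : Subring B :=
  Subring.closure (AtoB '' (ZAspan : Set A) ∪ {Tp})

/-- ℛ = Σ_k 𝒵_𝒜[Tᵖ]·li_k(T). -/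
noncomputable def Rtot : Submodule ℚ B :=
  Submodule.span ℚ {x : B | ∃ c ∈ ZATp, ∃ k : List ℕ, (∀ i ∈ k, 0 < i) ∧ x = c * liT k}

end Spans

/-! The partial sums `sᵢ = l₁ + ⋯ + lᵢ` turn the `p`-component of `ζ_𝒜(k)` into the nested sum
`∑_{0 < s₁ < ⋯ < s_r < p} s₁^{-k₁} ⋯ s_r^{-k_r}` in `𝔽_p`. Multiplying two nested sums and
splitting according to whether the outermost variables satisfy `s < t`, `t < s` or `s = t`
reproduces the three terms of the recursion defining the stuffle product, the diagonal because
`s^{-a} s^{-b} = s^{-(a+b)}`; induction on the total depth gives the relation for each `p`. -/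

open Finset

section NestedSum

variable {R : Type*} [CommSemiring R]

lemma sum_Ioo_eq_sum_Ioo_add_add_sum_Ioo {n s p : ℕ} (hs : s ∈ Ioo n p) (f : ℕ → R) :
    ∑ t ∈ Ioo n p, f t = ∑ t ∈ Ioo s p, f t + f s + ∑ t ∈ Ioo n s, f t := by
  rw [mem_Ioo] at hs
  have hsplit : Ioo n p = insert s (Ioo s p) ∪ Ioo n s := by
    ext t
    simp only [mem_Ioo, mem_union, mem_insert]
    omega
  rw [hsplit, sum_union (disjoint_left.2 fun t ht ht' => by simp at ht ht'; omega),
    sum_insert (by simp), add_comm (f s)]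

lemma sum_Ioo_mul_sum_Ioo (n p : ℕ) (f h : ℕ → R) :
    (∑ s ∈ Ioo n p, f s) * ∑ t ∈ Ioo n p, h t =
      ∑ s ∈ Ioo n p, f s * ∑ t ∈ Ioo s p, h t + ∑ t ∈ Ioo n p, h t * ∑ s ∈ Ioo t p, f s +
        ∑ s ∈ Ioo n p, f s * h s := by
  have hswap : ∑ s ∈ Ioo n p, ∑ t ∈ Ioo n s, f s * h t =
      ∑ t ∈ Ioo n p, ∑ s ∈ Ioo t p, f s * h t :=
    sum_comm' fun s t => by simp only [mem_Ioo]; omega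
  rw [sum_mul_sum, sum_congr rfl fun s hs => sum_Ioo_eq_sum_Ioo_add_add_sum_Ioo hs _,
    sum_add_distrib, sum_add_distrib, hswap]
  simp only [mul_sum, sum_mul, mul_comm (h _)]
  abel

/-- `nestedSum g p n k = ∑_{n < s₁ < ⋯ < s_r < p} g s₁ k₁ ⋯ g s_r k_r`. -/
def nestedSum (g : ℕ → ℕ → R) (p : ℕ) : ℕ → List ℕ → R
  | _, [] => 1
  | n, a :: v => ∑ s ∈ Ioo n p, g s a * nestedSum g p s v

variable (g : ℕ → ℕ → R) (p : ℕ)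

@[simp] lemma nestedSum_nil (n : ℕ) : nestedSum g p n [] = 1 := rfl

lemma nestedSum_cons (n a : ℕ) (v : List ℕ) :
    nestedSum g p n (a :: v) = ∑ s ∈ Ioo n p, g s a * nestedSum g p s v := rfl

lemma sum_mul_sum_map_nestedSum (n a : ℕ) (m : Multiset (List ℕ)) :
    ∑ s ∈ Ioo n p, g s a * (m.map (nestedSum g p s)).sum =
      ((m.map (a :: ·)).map (nestedSum g p n)).sum := by
  simp_rw [Multiset.map_map, Function.comp_def, nestedSum_cons, ← Multiset.sum_map_mul_left]
  exact Multiset.sum_map_sum_map _ _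

theorem nestedSum_mul_nestedSum (hg : ∀ s a b, g s a * g s b = g s (a + b)) :
    ∀ (n : ℕ) (v w : List ℕ),
      nestedSum g p n v * nestedSum g p n w = ((stuffleI v w).map (nestedSum g p n)).sum
  | _, [], w => by simp [stuffleI]
  | _, a :: v, [] => by simp [stuffleI]
  | n, a :: v, b :: w => by
    have h_lt : ∀ s, g s a * nestedSum g p s v * ∑ t ∈ Ioo s p, g t b * nestedSum g p t w =
        g s a * ((stuffleI v (b :: w)).map (nestedSum g p s)).sum := fun s => by
      rw [← nestedSum_cons, mul_assoc, nestedSum_mul_nestedSum hg s v (b :: w)]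
    have h_gt : ∀ t, g t b * nestedSum g p t w * ∑ s ∈ Ioo t p, g s a * nestedSum g p s v =
        g t b * ((stuffleI (a :: v) w).map (nestedSum g p t)).sum := fun t => by
      rw [← nestedSum_cons, mul_assoc, mul_comm (nestedSum g p t w),
        nestedSum_mul_nestedSum hg t (a :: v) w]
    have h_eq : ∀ s, g s a * nestedSum g p s v * (g s b * nestedSum g p s w) =
        g s (a + b) * ((stuffleI v w).map (nestedSum g p s)).sum := fun s => by
      rw [← nestedSum_mul_nestedSum hg s v w, ← hg]
      ring
    rw [nestedSum_cons, nestedSum_cons, sum_Ioo_mul_sum_Ioo]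
    simp only [h_lt, h_gt, h_eq, sum_mul_sum_map_nestedSum, stuffleI, Multiset.map_add,
      Multiset.sum_add]
termination_by _ v w => v.length + w.length

end NestedSum

section Tuples

lemma psum_eq_sum_ite {r : ℕ} (l : Fin r → ℕ) (i : Fin r) :
    psum l i = ∑ j, if j ≤ i then l j else 0 := by
  rw [psum, ← sum_filter]
  congr 1
  ext j
  simp

variable {r : ℕ} (x : ℕ) (m : Fin r → ℕ)

@[simp] lemma psum_cons_zero : psum (Fin.cons x m : Fin (r + 1) → ℕ) 0 = x := by
  simp [psum_eq_sum_ite]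

@[simp] lemma psum_cons_succ (i : Fin r) :
    psum (Fin.cons x m : Fin (r + 1) → ℕ) i.succ = x + psum m i := by
  simp [psum_eq_sum_ite, Fin.sum_univ_succ]

lemma mem_pf {p : ℕ} {l : Fin r → ℕ} : l ∈ pf r p ↔ ∀ i, 0 < l i ∧ l i < p := by
  simp [pf]

lemma sum_filter_pf_succ {M : Type*} [AddCommMonoid M] (p n : ℕ) (F : (Fin (r + 1) → ℕ) → M) :
    ∑ l ∈ (pf (r + 1) p).filter (fun l => n + ∑ i, l i < p), F l =
      ∑ s ∈ Ioo n p, ∑ m ∈ (pf r p).filter (fun m => s + ∑ i, m i < p),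
        F (Fin.cons (s - n) m) := by
  rw [sum_sigma']
  refine sum_nbij' (fun l => ⟨n + l 0, Fin.tail l⟩) (fun x => Fin.cons (x.1 - n) x.2)
    ?_ ?_ ?_ ?_ ?_
  · intro l hl
    simp only [mem_filter, mem_pf, Fin.sum_univ_succ, mem_sigma, mem_Ioo, Fin.tail] at hl ⊢
    have := (hl.1 0).1
    exact ⟨by omega, fun i => hl.1 i.succ, by omega⟩
  · rintro ⟨s, m⟩ hm
    simp only [mem_filter, mem_pf, Fin.sum_univ_succ, mem_sigma, mem_Ioo, Fin.forall_fin_succ,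
      Fin.cons_zero, Fin.cons_succ] at hm ⊢
    exact ⟨⟨⟨by omega, by omega⟩, hm.2.1⟩, by omega⟩
  · intro l _
    simp
  · rintro ⟨s, m⟩ hm
    simp only [mem_sigma, mem_Ioo] at hm
    simp [Nat.add_sub_cancel' hm.1.1.le]
  · intro l _
    simp

end Tuples

theorem sum_filter_pf_eq_nestedSum {R : Type*} [CommSemiring R] (g : ℕ → ℕ → R) (p : ℕ) :
    ∀ (k : List ℕ) (n : ℕ), n < p →
      ∑ l ∈ (pf k.length p).filter (fun l => n + ∑ i, l i < p),
        ∏ i, g (n + psum l i) (k.get i) = nestedSum g p n k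
  | [], n, hn => by
    rw [filter_true_of_mem fun l _ => by simpa using hn]
    simp [pf]
  | a :: v, n, _ => by
    refine (sum_filter_pf_succ p n _).trans (sum_congr rfl fun s hs => ?_)
    rw [mem_Ioo] at hs
    have hterm : ∀ m : Fin v.length → ℕ,
        ∏ i, g (n + psum (Fin.cons (s - n) m : Fin (v.length + 1) → ℕ) i) ((a :: v).get i) =
          g s a * ∏ i, g (s + psum m i) (v.get i) := fun m => by
      simp only [Fin.prod_univ_succ, psum_cons_zero, psum_cons_succ, ← Nat.add_assoc,
        Nat.add_sub_cancel' hs.1.le]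
      rfl
    rw [← sum_filter_pf_eq_nestedSum g p v s hs.2, mul_sum]
    exact sum_congr rfl fun m _ => hterm m

def zetaComponents (k : List ℕ) (p : PP) : ZMod p :=
  nestedSum (fun s a => ((s : ZMod p)⁻¹) ^ a) p 0 k

lemma zetaA_eq_Amk_zetaComponents (k : List ℕ) : zetaA k = Amk (zetaComponents k) := by
  unfold zetaA
  congr 1
  funext p
  rw [zetaComponents, ← sum_filter_pf_eq_nestedSum _ _ k 0 p.2.pos]
  simp [den, inv_pow]

lemma zetaComponents_mul (k k' : List ℕ) :
    zetaComponents k * zetaComponents k' = ((stuffleI k k').map zetaComponents).sum := by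
  funext p
  simp only [Pi.mul_apply, Pi.multiset_sum_apply, Multiset.map_map, Function.comp_def,
    zetaComponents]
  exact nestedSum_mul_nestedSum _ _ (fun s a b => (pow_add (s : ZMod p)⁻¹ a b).symm) 0 k k'

theorem zetaA_mul_zetaA (k k' : List ℕ) :
    zetaA k * zetaA k' = ((stuffleI k k').map zetaA).sum := by
  simp only [zetaA_eq_Amk_zetaComponents, ← map_mul, zetaComponents_mul, map_multiset_sum,
    Multiset.map_map, Function.comp_def]

theorem pos_of_mem_stuffleI : ∀ {v w u : List ℕ}, (∀ i ∈ v, 0 < i) → (∀ i ∈ w, 0 < i) →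
    u ∈ stuffleI v w → ∀ i ∈ u, 0 < i
  | [], w, u, _, hw, hu => by
    rw [stuffleI, Multiset.mem_singleton] at hu
    exact hu ▸ hw
  | a :: v, [], u, hv, _, hu => by
    rw [stuffleI, Multiset.mem_singleton] at hu
    exact hu ▸ hv
  | a :: v, b :: w, _, hv, hw, hu => by
    rw [stuffleI] at hu
    simp only [Multiset.mem_add, Multiset.mem_map] at hu
    have hv' := List.forall_mem_cons.1 hv
    have hw' := List.forall_mem_cons.1 hw
    rcases hu with (⟨u, hu, rfl⟩ | ⟨u, hu, rfl⟩) | ⟨u, hu, rfl⟩ <;> rw [List.forall_mem_cons]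
    · exact ⟨hv'.1, pos_of_mem_stuffleI hv'.2 hw hu⟩
    · exact ⟨hw'.1, pos_of_mem_stuffleI hv hw'.2 hu⟩
    · exact ⟨Nat.add_pos_left hv'.1 b, pos_of_mem_stuffleI hv'.2 hw'.2 hu⟩
termination_by v w => v.length + w.length

theorem mul_mem_ZAspan {x y : A} (hx : x ∈ ZAspan) (hy : y ∈ ZAspan) : x * y ∈ ZAspan := by
  have hle : ZAspan * ZAspan ≤ ZAspan := by
    rw [ZAspan, Submodule.span_mul_span, Submodule.span_le]
    rintro _ ⟨_, ⟨k, hk, rfl⟩, _, ⟨k', hk', rfl⟩, rfl⟩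
    change zetaA k * zetaA k' ∈ ZAspan
    rw [zetaA_mul_zetaA]
    refine multiset_sum_mem _ fun z hz => ?_
    obtain ⟨u, hu, rfl⟩ := Multiset.mem_map.1 hz
    exact Submodule.subset_span ⟨u, pos_of_mem_stuffleI hk hk' hu, rfl⟩
  exact hle (Submodule.mul_mem_mul hx hy)

/-- **Stuffle relation for finite multiple zeta values**: ζ_𝒜(𝐤)ζ_𝒜(𝐤') = ζ_𝒜(𝐤 * 𝐤').
In particular the ℚ-span 𝒵_𝒜 of all FMZVs is a ℚ-subalgebra of 𝒜. -/
theorem zetaA_stuffle :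
    (∀ k k' : List ℕ, (∀ i ∈ k, 0 < i) → (∀ i ∈ k', 0 < i) →
        zetaA k * zetaA k' = ((stuffleI k k').map zetaA).sum)
    ∧ ∀ x ∈ ZAspan, ∀ y ∈ ZAspan, x * y ∈ ZAspan :=
  ⟨fun k k' _ _ => zetaA_mul_zetaA k k', fun _ hx _ hy => mul_mem_ZAspan hx hy⟩

end FMP
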